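/- arXiv:1702.02848 — 10 statements merged into one kernel-verified Lean document; each statement's English description precedes it below -/
import Mathlib

section
/- Let G be a finite simple graph, r ∈ ℕ, L a linear order on V(G), and v ∈ V(G). Then for every vertex w ∈ R_v (that is, every w such that v ∈ WReach_{2r}[G,L,w] and v is the L-minimum element of WReach_r[G,L,w]), the closed r-neighborhood of w is contained in the cluster of v: N_r[w] ⊆ X_v. -/
/-- `u` is weakly `s`-reachable from `v` w.r.t. the linear order on `V`:
there is a path of length at most `s` between `u` and `v` on which `u` is minimum. -/
def wreach {V : Type*} [LinearOrder V] (G : SimpleGraph V) (s : ℕ) (v : V) : Set V :=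
  {u | ∃ p : G.Walk u v, p.IsPath ∧ p.length ≤ s ∧ ∀ x ∈ p.support, u ≤ x}

/-- The closed `r`-neighborhood `N_r[v]`. -/
def ball {V : Type*} (G : SimpleGraph V) (r : ℕ) (v : V) : Set V :=
  {u | ∃ p : G.Walk v u, p.length ≤ r}

/-- `D` is a distance-`r` dominating set. -/
def isRDom {V : Type*} (G : SimpleGraph V) (r : ℕ) (D : Set V) : Prop :=
  ∀ w : V, ∃ v ∈ D, w ∈ ball G r v

/-- The cluster `X_v = {w : v ∈ WReach_{2r}[G,L,w]}`. -/
def cluster {V : Type*} [LinearOrder V] (G : SimpleGraph V) (r : ℕ) (v : V) : Set V :=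
  {w | v ∈ wreach G (2 * r) w}

lemma aux_min_wreach {V : Type*} [LinearOrder V] (G : SimpleGraph V) (r : ℕ) (w x : V)
    (t : G.Walk w x) (ht : t.length ≤ r) : ∃ y ∈ wreach G r w, y ≤ x := by
  set t' := t.bypass with ht'
  have hp : t'.IsPath := t.bypass_isPath
  have hl : t'.length ≤ r := le_trans t.length_bypass_le ht
  have hne : t'.support.toFinset.Nonempty := ⟨w, by simp⟩
  set y := t'.support.toFinset.min' hne with hy
  have hymem : y ∈ t'.support := by
    have := t'.support.toFinset.min'_mem hne
    simpa using this
  have hymin : ∀ z ∈ t'.support, y ≤ z := fun z hz =>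
    t'.support.toFinset.min'_le z (by simpa using hz)
  refine ⟨y, ⟨(t'.takeUntil y hymem).reverse, (hp.takeUntil hymem).reverse, ?_, ?_⟩,
    hymin x t'.end_mem_support⟩
  · rw [SimpleGraph.Walk.length_reverse]
    exact le_trans (SimpleGraph.Walk.length_takeUntil_le t' hymem) hl
  · intro z hz
    rw [SimpleGraph.Walk.support_reverse] at hz
    exact hymin z (t'.support_takeUntil_subset hymem (List.mem_reverse.mp hz))

/-- if `w ∈ R_v` (i.e. `w ∈ X_v` and `v` is the `L`-minimum of
`WReach_r[G,L,w]`), then `N_r[w] ⊆ X_v`. -/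
theorem stmt0 {V : Type*} [Fintype V] [LinearOrder V] (G : SimpleGraph V) (r : ℕ)
    (v w : V) (hw : w ∈ cluster G r v)
    (hvmem : v ∈ wreach G r w) (hvmin : ∀ u ∈ wreach G r w, v ≤ u) :
    ball G r w ⊆ cluster G r v := by
  intro u hu
  obtain ⟨q, hq⟩ := hu
  obtain ⟨p, hp, hpl, hpmin⟩ := hvmem
  set c := p.append q with hc
  refine ⟨c.bypass, c.bypass_isPath, ?_, ?_⟩
  · calc c.bypass.length ≤ c.length := c.length_bypass_le
    _ = p.length + q.length := SimpleGraph.Walk.length_append p q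
    _ ≤ r + r := Nat.add_le_add hpl hq
    _ = 2 * r := by ring
  · intro x hx
    have hx' : x ∈ c.support := c.support_bypass_subset hx
    rw [hc, SimpleGraph.Walk.mem_support_append_iff] at hx'
    rcases hx' with h | h
    · exact hpmin x h
    · have hq' : (q.takeUntil x h).length ≤ r :=
        le_trans (SimpleGraph.Walk.length_takeUntil_le q h) hq
      obtain ⟨y, hy, hyx⟩ := aux_min_wreach G r w x (q.takeUntil x h) hq'
      exact le_trans (hvmin y hy) hyx
end

section
/- Let G be a finite simple graph, r,c ∈ ℕ, and L a linear order on V(G) such that |WReach_{2r}[G,L,v]| ≤ c for every v ∈ V(G). Then the collection 𝒳 = {X_v : v ∈ V(G)} is an r-neighborhood cover of G of radius at most 2r and degree at most c; that is: (i) for every w ∈ V(G) there exists v ∈ V(G) with N_r[w] ⊆ X_v; (ii) for every v ∈ V(G) and every w ∈ X_v there is a path of length at most 2r from w to v all of whose vertices lie in X_v (so G[X_v] has radius at most 2r, with center v); and (iii) every vertex w ∈ V(G) belongs to at most c of the sets X_v. -/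
lemma mem_ball_of_mem_support {V : Type*} [DecidableEq V] {G : SimpleGraph V} {r : ℕ} {w u x : V}
    (q : G.Walk w u) (hq : q.length ≤ r) (hx : x ∈ q.support) : x ∈ ball G r w :=
  ⟨q.takeUntil x hx, le_trans (SimpleGraph.Walk.length_takeUntil_le q hx) hq⟩

/-- if `|WReach_{2r}[G,L,v]| ≤ c` for all `v`, then the collection
`{X_v : v ∈ V(G)}` is an `r`-neighborhood cover of radius at most `2r` (with center `v`
for the cluster `X_v`) and degree at most `c`. -/
theorem stmt1 {V : Type*} [Fintype V] [LinearOrder V] (G : SimpleGraph V) (r c : ℕ)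
    (hc : ∀ v : V, (wreach G (2 * r) v).ncard ≤ c) :
    -- (i) the clusters cover all closed `r`-neighborhoods
    (∀ w : V, ∃ v : V, ball G r w ⊆ cluster G r v) ∧
    -- (ii) each cluster has radius at most `2r`, with center `v`
    (∀ v : V, ∀ w ∈ cluster G r v,
      ∃ p : G.Walk w v, p.length ≤ 2 * r ∧ ∀ x ∈ p.support, x ∈ cluster G r v) ∧
    -- (iii) every vertex belongs to at most `c` clusters
    (∀ w : V, {v : V | w ∈ cluster G r v}.ncard ≤ c) := by
  classical
  refine ⟨?_, ?_, ?_⟩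
  · intro w
    have hne : (ball G r w).Nonempty := ⟨w, SimpleGraph.Walk.nil, by simp⟩
    obtain ⟨v, hv, hmin⟩ := Set.exists_min_image (ball G r w) id (Set.toFinite _) hne
    refine ⟨v, ?_⟩
    intro u hu
    obtain ⟨q, hq⟩ := hu
    obtain ⟨q', hq'⟩ := hv
    -- walk from v to u through w
    set p0 : G.Walk v u := q'.reverse.append q with hp0
    have hlen0 : p0.length ≤ 2 * r := by
      have : p0.length = q'.length + q.length := by
        simp [hp0, SimpleGraph.Walk.length_append]
      omega
    have hsupp0 : ∀ x ∈ p0.support, x ∈ ball G r w := by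
      intro x hx
      rw [hp0, SimpleGraph.Walk.mem_support_append_iff] at hx
      rcases hx with hx | hx
      · rw [SimpleGraph.Walk.support_reverse, List.mem_reverse] at hx
        exact mem_ball_of_mem_support q' hq' hx
      · exact mem_ball_of_mem_support q hq hx
    refine ⟨p0.bypass, p0.bypass_isPath, le_trans p0.length_bypass_le hlen0, ?_⟩
    intro x hx
    exact hmin x (hsupp0 x (p0.support_bypass_subset hx))
  · intro v w hw
    obtain ⟨p, hp, hlen, hmin⟩ := hw
    refine ⟨p.reverse, by simpa using hlen, ?_⟩
    intro x hx
    rw [SimpleGraph.Walk.support_reverse, List.mem_reverse] at hx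
    exact ⟨p.takeUntil x hx, hp.takeUntil hx,
      le_trans (SimpleGraph.Walk.length_takeUntil_le p hx) hlen,
      fun y hy => hmin y (SimpleGraph.Walk.support_takeUntil_subset p hx hy)⟩
  · intro w
    have : {v : V | w ∈ cluster G r v} = wreach G (2 * r) w := rfl
    rw [this]
    exact hc w
end

section
/- Let G be a finite simple graph, r,c ∈ ℕ, and L a linear order on V(G) such that |WReach_{2r}[G,L,v]| ≤ c for every v ∈ V(G). Let D = {v ∈ V(G) : v = min_L WReach_r[G,L,w] for some w ∈ V(G)}. Then for every distance-r dominating set M of G, |D| ≤ c·|M|; in particular D is a c-approximation of a minimum distance-r dominating set of G. -/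
/-- if `|WReach_{2r}[G,L,v]| ≤ c` for all `v`, then the set
`D = {v : v = min_L WReach_r[G,L,w] for some w}` satisfies `|D| ≤ c·|M|` for every
distance-`r` dominating set `M` of `G`. -/
theorem stmt4 {V : Type*} [Fintype V] [LinearOrder V] (G : SimpleGraph V) (r c : ℕ)
    (hc : ∀ v : V, (wreach G (2 * r) v).ncard ≤ c)
    (M : Set V) (hM : isRDom G r M) :
    {v : V | ∃ w : V, v ∈ wreach G r w ∧ ∀ u ∈ wreach G r w, v ≤ u}.ncard ≤ c * M.ncard := by
  classical
  set D := {v : V | ∃ w : V, v ∈ wreach G r w ∧ ∀ u ∈ wreach G r w, v ≤ u} with hD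
  have key : ∀ v ∈ D, ∃ m ∈ M, v ∈ wreach G (2 * r) m := by
    rintro v ⟨w, ⟨p, hp, hpl, hpmin⟩, hmin⟩
    obtain ⟨m, hmM, q, hql⟩ := hM w
    refine ⟨m, hmM, ?_⟩
    -- every vertex on q is ≥ v
    have hq : ∀ x ∈ q.support, v ≤ x := by
      intro x hx
      set d := q.dropUntil x hx with hd
      have hdl : d.length ≤ r := (q.length_dropUntil_le hx).trans hql
      have hne : d.support.toFinset.Nonempty :=
        ⟨x, List.mem_toFinset.2 d.start_mem_support⟩
      set y := d.support.toFinset.min' hne with hy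
      have hymem : y ∈ d.support := List.mem_toFinset.1 (d.support.toFinset.min'_mem hne)
      have hymin : ∀ z ∈ d.support, y ≤ z := fun z hz =>
        Finset.min'_le _ _ (List.mem_toFinset.2 hz)
      set e := d.dropUntil y hymem with he
      have hvy : v ≤ y := by
        refine hmin y ⟨e.bypass, e.bypass_isPath, ?_, ?_⟩
        · exact e.length_bypass_le.trans ((d.length_dropUntil_le hymem).trans hdl)
        · intro z hz
          exact hymin z (d.support_dropUntil_subset hymem (e.support_bypass_subset hz))
      exact hvy.trans (hymin x d.start_mem_support)
    set W := p.append q.reverse with hW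
    have hWl : W.length ≤ 2 * r := by
      rw [hW, SimpleGraph.Walk.length_append, SimpleGraph.Walk.length_reverse]
      omega
    have hWmin : ∀ x ∈ W.support, v ≤ x := by
      intro x hx
      rw [hW, SimpleGraph.Walk.support_append, List.mem_append] at hx
      rcases hx with hx | hx
      · exact hpmin x hx
      · have : x ∈ q.reverse.support := List.mem_of_mem_tail hx
        rw [SimpleGraph.Walk.support_reverse, List.mem_reverse] at this
        exact hq x this
    exact ⟨W.bypass, W.bypass_isPath, W.length_bypass_le.trans hWl,
      fun x hx => hWmin x (W.support_bypass_subset hx)⟩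
  have hDfin : D.Finite := Set.toFinite _
  have hMfin : M.Finite := Set.toFinite _
  have hsub : hDfin.toFinset ⊆
      hMfin.toFinset.biUnion (fun m => (Set.toFinite (wreach G (2 * r) m)).toFinset) := by
    intro v hv
    obtain ⟨m, hm, hvm⟩ := key v (hDfin.mem_toFinset.1 hv)
    exact Finset.mem_biUnion.2 ⟨m, hMfin.mem_toFinset.2 hm, (Set.Finite.mem_toFinset _).2 hvm⟩
  calc D.ncard = hDfin.toFinset.card := Set.ncard_eq_toFinset_card _ _
    _ ≤ (hMfin.toFinset.biUnion
          (fun m => (Set.toFinite (wreach G (2 * r) m)).toFinset)).card :=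
        Finset.card_le_card hsub
    _ ≤ ∑ m ∈ hMfin.toFinset, (Set.toFinite (wreach G (2 * r) m)).toFinset.card :=
        Finset.card_biUnion_le
    _ ≤ ∑ _m ∈ hMfin.toFinset, c := by
        refine Finset.sum_le_sum fun m _ => ?_
        rw [← Set.ncard_eq_toFinset_card]
        exact hc m
    _ = c * M.ncard := by
        rw [Finset.sum_const, smul_eq_mul, Set.ncard_eq_toFinset_card _ hMfin, mul_comm]
end

section
/- Let G be a finite simple graph, r ∈ ℕ, and L a linear order on V(G). Let w ∈ V(G) and let v be the L-minimum element of WReach_r[G,L,w]. Then every distance-r dominating set M of G satisfies M ∩ X_v ≠ ∅. -/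
/-- if `v` is the `L`-minimum element of `WReach_r[G,L,w]`, then every
distance-`r` dominating set `M` of `G` meets the cluster `X_v`. -/
theorem stmt5 {V : Type*} [Fintype V] [LinearOrder V] (G : SimpleGraph V) (r : ℕ)
    (w v : V) (hvmem : v ∈ wreach G r w) (hvmin : ∀ u ∈ wreach G r w, v ≤ u)
    (M : Set V) (hM : isRDom G r M) :
    (M ∩ cluster G r v).Nonempty := by
  obtain ⟨p, hp_path, hp_len, hp_min⟩ := hvmem
  obtain ⟨m, hmM, q0, hq0_len⟩ := hM w
  -- replace q0 by a path
  set q : G.Walk m w := q0.bypass with hq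
  have hq_path : q.IsPath := q0.bypass_isPath
  have hq_len : q.length ≤ r := le_trans q0.length_bypass_le hq0_len
  -- every vertex on q is ≥ v
  have hq_min : ∀ x ∈ q.support, v ≤ x := by
    intro x hx
    -- consider the suffix of q from x to w
    set q1 := q.dropUntil x hx with hq1
    have hq1_path : q1.IsPath := hq_path.dropUntil hx
    have hq1_len : q1.length ≤ r := le_trans (q.length_dropUntil_le hx) hq_len
    have hne : q1.support.toFinset.Nonempty := by
      refine ⟨x, ?_⟩
      simp [q1.start_mem_support]
    set y := q1.support.toFinset.min' hne with hy
    have hy_mem : y ∈ q1.support := by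
      have := q1.support.toFinset.min'_mem hne
      simpa using this
    have hy_le : ∀ z ∈ q1.support, y ≤ z := by
      intro z hz
      exact q1.support.toFinset.min'_le z (by simpa using hz)
    -- y is in wreach G r w
    have hyw : y ∈ wreach G r w := by
      refine ⟨q1.dropUntil y hy_mem, hq1_path.dropUntil hy_mem,
        le_trans (q1.length_dropUntil_le hy_mem) hq1_len, ?_⟩
      intro z hz
      exact hy_le z (q1.support_dropUntil_subset hy_mem hz)
    have h1 : v ≤ y := hvmin y hyw
    have h2 : y ≤ x := hy_le x q1.start_mem_support
    exact le_trans h1 h2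
  -- combined walk from v to m
  set c : G.Walk v m := p.append q.reverse with hc
  have hc_min : ∀ x ∈ c.support, v ≤ x := by
    intro x hx
    rw [hc, SimpleGraph.Walk.mem_support_append_iff] at hx
    rcases hx with hx | hx
    · exact hp_min x hx
    · exact hq_min x (by simpa using hx)
  refine ⟨m, hmM, ?_⟩
  refine ⟨c.bypass, c.bypass_isPath, ?_, ?_⟩
  · calc c.bypass.length ≤ c.length := c.length_bypass_le
      _ = p.length + q.reverse.length := by rw [hc, SimpleGraph.Walk.length_append]
      _ ≤ r + r := by
          rw [SimpleGraph.Walk.length_reverse]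
          exact Nat.add_le_add hp_len hq_len
      _ = 2 * r := (two_mul r).symm
  · intro x hx
    exact hc_min x (c.support_bypass_subset hx)
end

section
/- Let G be a finite connected simple graph, r ∈ ℕ, and let D be a distance-r dominating set of G. Let 𝒫 be a set of paths in G such that for each pair u,v ∈ D with dist(u,v) ≤ 2r+1 there is a path P_{u,v} ∈ 𝒫 joining u and v. Then the subgraph of G induced by the vertex set D ∪ ⋃_{P∈𝒫} V(P) is connected. -/
/-!
Two vertices `u, v ∈ D` are joined in `G` by a walk; if it is longer than `2r + 1`, the
vertex at position `r + 1` on it is within distance `r` of some `d ∈ D`. Then `u` and `d`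
are at distance at most `2r + 1`, hence joined by one of the chosen paths, while the walk
from `d` to `v` through that vertex is strictly shorter than the original one. Induction on
the length of the walk connects all of `D` inside the induced subgraph, and every vertex of
a chosen path is connected along that path to its endpoints in `D`.
-/

namespace SimpleGraph

variable {V : Type*} {G : SimpleGraph V} {S : Set V}

lemma Walk.reachable_induce_of_support_subset {u v x y : V} (p : G.Walk u v)
    (hS : {z | z ∈ p.support} ⊆ S) (hx : x ∈ p.support) (hy : y ∈ p.support) :
    (G.induce S).Reachable ⟨x, hS hx⟩ ⟨y, hS hy⟩ :=
  (p.connected_induce_support.preconnected ⟨x, hx⟩ ⟨y, hy⟩).map (induceHomOfLE G hS).toHom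

lemma reachable_induce_of_isRDom {r : ℕ} {D : Set V} (hD : isRDom G r D) (hDS : D ⊆ S)
    (hnear : ∀ u v (hu : u ∈ D) (hv : v ∈ D), G.dist u v ≤ 2 * r + 1 →
      (G.induce S).Reachable ⟨u, hDS hu⟩ ⟨v, hDS hv⟩)
    {u v : V} (hu : u ∈ D) (hv : v ∈ D) (p : G.Walk u v) :
    (G.induce S).Reachable ⟨u, hDS hu⟩ ⟨v, hDS hv⟩ := by
  induction hn : p.length using Nat.strong_induction_on generalizing u with
  | _ n ih =>
  by_cases hshort : p.length ≤ 2 * r + 1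
  · exact hnear u v hu hv ((dist_le p).trans hshort)
  obtain ⟨d, hd, q, hq⟩ := hD (p.getVert (r + 1))
  have hud : G.dist u d ≤ 2 * r + 1 := by
    refine (dist_le ((p.take (r + 1)).append q.reverse)).trans ?_
    simp only [Walk.length_append, Walk.take_length, Walk.length_reverse]
    omega
  have hdv := ih _ (by rw [← hn, Walk.length_append, Walk.drop_length]; omega) hd
    (q.append (p.drop (r + 1))) rfl
  exact (hnear u d hu hd hud).trans hdv

end SimpleGraph

open SimpleGraph in
theorem stmt6_general {V : Type*} (G : SimpleGraph V) (hG : G.Connected) (r : ℕ)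
    (D : Set V) (hD : isRDom G r D)
    (P : ∀ u v : V, G.Walk u v) :
    (G.induce (D ∪
      ⋃ (u : V) (_ : u ∈ D) (v : V) (_ : v ∈ D) (_ : G.dist u v ≤ 2 * r + 1),
        {x : V | x ∈ (P u v).support})).Connected := by
  set S := D ∪ ⋃ (u : V) (_ : u ∈ D) (v : V) (_ : v ∈ D) (_ : G.dist u v ≤ 2 * r + 1),
    {x : V | x ∈ (P u v).support}
  have hDS : D ⊆ S := Set.subset_union_left
  have hPS : ∀ u v, u ∈ D → v ∈ D → G.dist u v ≤ 2 * r + 1 → {x | x ∈ (P u v).support} ⊆ S :=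
    fun u v hu hv huv x hx => Or.inr (Set.mem_biUnion hu (Set.mem_biUnion hv
      (Set.mem_iUnion_of_mem huv hx)))
  have hDreach : ∀ {u v : V} (hu : u ∈ D) (hv : v ∈ D), G.Walk u v →
      (G.induce S).Reachable ⟨u, hDS hu⟩ ⟨v, hDS hv⟩ :=
    reachable_induce_of_isRDom hD hDS fun u v hu hv huv =>
      (P u v).reachable_induce_of_support_subset (hPS u v hu hv huv)
        (P u v).start_mem_support (P u v).end_mem_support
  obtain ⟨d₀, hd₀, -⟩ := hD hG.nonempty.some
  refine (connected_iff_exists_forall_reachable _).mpr ⟨⟨d₀, hDS hd₀⟩, ?_⟩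
  rintro ⟨x, hx | hx⟩
  · exact hDreach hd₀ hx (hG.preconnected d₀ x).some
  · simp only [Set.mem_iUnion] at hx
    obtain ⟨u, hu, v, hv, huv, hx⟩ := hx
    exact (hDreach hd₀ hu (hG.preconnected d₀ u).some).trans
      ((P u v).reachable_induce_of_support_subset (hPS u v hu hv huv)
        (P u v).start_mem_support hx)

/-- let `G` be connected, `D` a distance-`r` dominating set, and for each
pair `u,v ∈ D` with `dist(u,v) ≤ 2r+1` let `P u v` be a path joining `u` and `v`.
Then the subgraph induced by `D` together with the vertex sets of all these paths
is connected. -/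
theorem stmt6 {V : Type*} [Fintype V] (G : SimpleGraph V) (hG : G.Connected) (r : ℕ)
    (D : Set V) (hD : isRDom G r D)
    (P : ∀ u v : V, G.Walk u v) (hP : ∀ u v : V, (P u v).IsPath) :
    (G.induce (D ∪
      ⋃ (u : V) (_ : u ∈ D) (v : V) (_ : v ∈ D) (_ : G.dist u v ≤ 2 * r + 1),
        {x : V | x ∈ (P u v).support})).Connected :=
  stmt6_general G hG r D hD P
end

section
/- Let G be a finite connected simple graph, r ∈ ℕ, L a linear order on V(G), and D a distance-r dominating set of G. Let D' ⊆ V(G) be a set obtained from D by adding, for each v ∈ D and each w ∈ WReach_{2r+1}[G,L,v], the vertex set of some path in G between v and w. Then D' is a connected distance-r dominating set of G, i.e. D' is a distance-r dominating set and G[D'] is connected. -/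
/-- A walk with support in `S` gives reachability in the induced graph. -/
lemma induce_reach {V : Type*} (G : SimpleGraph V) (S : Set V) {a b : V} (p : G.Walk a b)
    (hp : ∀ x ∈ p.support, x ∈ S) (ha : a ∈ S) (hb : b ∈ S) :
    (G.induce S).Reachable ⟨a, ha⟩ ⟨b, hb⟩ := by
  induction p with
  | nil => exact SimpleGraph.Reachable.refl _
  | @cons a c b h q ih =>
    have hc : c ∈ S := hp c (by simp)
    have h1 : (G.induce S).Adj ⟨a, ha⟩ ⟨c, hc⟩ := h
    exact (h1.reachable).trans (ih (fun x hx => hp x (by simp [hx])) hc hb)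

/-- If `v, v'` are joined by a walk of length ≤ `s` there is a common
weakly `s`-reachable vertex. -/
lemma common_wreach {V : Type*} [LinearOrder V] (G : SimpleGraph V) (s : ℕ) {v v' : V}
    (p : G.Walk v v') (hl : p.length ≤ s) :
    ∃ u, u ∈ wreach G s v ∧ u ∈ wreach G s v' := by
  classical
  set q := p.bypass with hq
  have hqp : q.IsPath := p.bypass_isPath
  have hql : q.length ≤ s := le_trans (p.length_bypass_le) hl
  have hne : q.support ≠ [] := q.support_ne_nil
  have hfne : q.support.toFinset.Nonempty := by
    simp [List.toFinset_nonempty_iff, hne]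
  set u := q.support.toFinset.min' hfne with hu
  have hmem : u ∈ q.support := by
    have := q.support.toFinset.min'_mem hfne
    simpa using this
  have hmin : ∀ x ∈ q.support, u ≤ x := fun x hx =>
    q.support.toFinset.min'_le x (by simpa using hx)
  refine ⟨u, ⟨(q.takeUntil u hmem).reverse, (hqp.takeUntil hmem).reverse, ?_, ?_⟩,
    ⟨q.dropUntil u hmem, hqp.dropUntil hmem, ?_, ?_⟩⟩
  · rw [SimpleGraph.Walk.length_reverse]
    exact le_trans (q.length_takeUntil_le hmem) hql
  · intro x hx
    rw [SimpleGraph.Walk.support_reverse, List.mem_reverse] at hx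
    exact hmin x (q.support_takeUntil_subset hmem hx)
  · exact le_trans (q.length_dropUntil_le hmem) hql
  · intro x hx
    exact hmin x (q.support_dropUntil_subset hmem hx)

/-- Chaining lemma: walking through the graph, the dominators of the endpoints
are connected in the induced graph. -/
lemma chain_reach {V : Type*} (G : SimpleGraph V) (r : ℕ) (D D' : Set V) (hsub : D ⊆ D')
    (hD : isRDom G r D)
    (hB : ∀ v, ∀ hv : v ∈ D, ∀ v', ∀ hv' : v' ∈ D, ∀ p : G.Walk v v', p.length ≤ 2 * r + 1 →
      (G.induce D').Reachable ⟨v, hsub hv⟩ ⟨v', hsub hv'⟩) :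
    ∀ {x y : V} (p : G.Walk x y) (dx : V) (hdx : dx ∈ D), x ∈ ball G r dx →
      ∀ (dy : V) (hdy : dy ∈ D), y ∈ ball G r dy →
      (G.induce D').Reachable ⟨dx, hsub hdx⟩ ⟨dy, hsub hdy⟩ := by
  intro x y p
  induction p with
  | @nil x =>
    intro dx hdx hx dy hdy hy
    obtain ⟨px, hpx⟩ := hx
    obtain ⟨py, hpy⟩ := hy
    refine hB dx hdx dy hdy (px.append py.reverse) ?_
    rw [SimpleGraph.Walk.length_append, SimpleGraph.Walk.length_reverse]
    omega
  | @cons x c y h q ih =>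
    intro dx hdx hx dy hdy hy
    obtain ⟨d', hd', pc, hpc⟩ := hD c
    obtain ⟨px, hpx⟩ := hx
    have step : (G.induce D').Reachable ⟨dx, hsub hdx⟩ ⟨d', hsub hd'⟩ := by
      refine hB dx hdx d' hd' (px.append ((SimpleGraph.Walk.cons h SimpleGraph.Walk.nil).append pc.reverse)) ?_
      simp only [SimpleGraph.Walk.length_append, SimpleGraph.Walk.length_cons,
        SimpleGraph.Walk.length_nil, SimpleGraph.Walk.length_reverse]
      omega
    exact step.trans (ih d' hd' ⟨pc, hpc⟩ dy hdy hy)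

/-- let `G` be connected, `D` a distance-`r` dominating set, and let `D'`
be obtained from `D` by adding, for each `v ∈ D` and each `w ∈ WReach_{2r+1}[G,L,v]`,
the vertex set of some path `P v w` between `v` and `w`. Then `D'` is a connected
distance-`r` dominating set. -/
theorem stmt8 {V : Type*} [Fintype V] [LinearOrder V] (G : SimpleGraph V)
    (hG : G.Connected) (r : ℕ) (D : Set V) (hD : isRDom G r D)
    (P : ∀ v w : V, G.Walk v w) (hP : ∀ v w : V, (P v w).IsPath)
    (D' : Set V)
    (hD' : D' = D ∪
      ⋃ (v : V) (_ : v ∈ D) (w : V) (_ : w ∈ wreach G (2 * r + 1) v),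
        {x : V | x ∈ (P v w).support}) :
    isRDom G r D' ∧ (G.induce D').Connected := by
  classical
  have hsub : D ⊆ D' := by rw [hD']; exact Set.subset_union_left
  -- supports of the chosen paths are in D'
  have hsupp : ∀ v, v ∈ D → ∀ w, w ∈ wreach G (2 * r + 1) v →
      ∀ x ∈ (P v w).support, x ∈ D' := by
    intro v hv w hw x hx
    rw [hD']
    right
    simp only [Set.mem_iUnion]
    exact ⟨v, hv, w, hw, hx⟩
  -- short connections between elements of D
  have hB : ∀ v, ∀ hv : v ∈ D, ∀ v', ∀ hv' : v' ∈ D, ∀ p : G.Walk v v',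
      p.length ≤ 2 * r + 1 →
      (G.induce D').Reachable ⟨v, hsub hv⟩ ⟨v', hsub hv'⟩ := by
    intro v hv v' hv' p hp
    obtain ⟨u, hu, hu'⟩ := common_wreach G (2 * r + 1) p hp
    have hm1 : ∀ x ∈ (P v u).support, x ∈ D' := hsupp v hv u hu
    have hm2 : ∀ x ∈ (P v' u).support, x ∈ D' := hsupp v' hv' u hu'
    have huD' : u ∈ D' := hm1 u (SimpleGraph.Walk.end_mem_support _)
    have r1 : (G.induce D').Reachable ⟨v, hsub hv⟩ ⟨u, huD'⟩ :=
      induce_reach G D' (P v u) hm1 (hsub hv) huD'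
    have r2 : (G.induce D').Reachable ⟨v', hsub hv'⟩ ⟨u, huD'⟩ :=
      induce_reach G D' (P v' u) hm2 (hsub hv') huD'
    exact r1.trans r2.symm
  -- every element of D' is connected to some element of D
  have hconn : ∀ a : D', ∃ d, ∃ hd : d ∈ D,
      (G.induce D').Reachable ⟨d, hsub hd⟩ a := by
    rintro ⟨a, ha⟩
    rw [hD'] at ha
    rcases ha with ha | ha
    · exact ⟨a, ha, SimpleGraph.Reachable.refl _⟩
    · simp only [Set.mem_iUnion] at ha
      obtain ⟨v, hv, w, hw, hmem⟩ := ha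
      have hmem' : a ∈ (P v w).support := hmem
      have hm : ∀ x ∈ (P v w).support, x ∈ D' := hsupp v hv w hw
      have haD' : a ∈ D' := hm a hmem'
      refine ⟨v, hv, ?_⟩
      have := induce_reach G D' ((P v w).takeUntil a hmem')
        (fun x hx => hm x ((P v w).support_takeUntil_subset hmem' hx))
        (hsub hv) haD'
      exact this
  constructor
  · intro w
    obtain ⟨v, hv, hb⟩ := hD w
    exact ⟨v, hsub hv, hb⟩
  · rw [SimpleGraph.connected_iff]
    constructor
    · rintro ⟨a, ha⟩ ⟨b, hb⟩
      obtain ⟨da, hda, ra⟩ := hconn ⟨a, ha⟩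
      obtain ⟨db, hdb, rb⟩ := hconn ⟨b, hb⟩
      have hwalk : Nonempty (G.Walk da db) := hG.preconnected da db
      obtain ⟨p⟩ := hwalk
      have := chain_reach G r D D' hsub hD hB p da hda
        ⟨SimpleGraph.Walk.nil, by simp⟩ db hdb ⟨SimpleGraph.Walk.nil, by simp⟩
      exact (ra.symm.trans this).trans rb
    · obtain ⟨w⟩ := hG.nonempty
      obtain ⟨v, hv, _⟩ := hD w
      exact ⟨⟨v, hsub hv⟩⟩
end

section
/- Let G be a finite connected simple graph, r,c ∈ ℕ with c ≥ 1, and L a linear order on V(G) such that |WReach_{2r+1}[G,L,v]| ≤ c for every v ∈ V(G). Then for every distance-r dominating set M of G there exists a connected distance-r dominating set D' of G with |D'| ≤ c²·(2r+1)·|M|. -/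
section

open Set SimpleGraph

variable {V : Type*} {G : SimpleGraph V}

lemma SimpleGraph.Preconnected.of_adj_closed (hG : G.Preconnected) {P : V → Prop}
    (hP : ∀ ⦃u v⦄, G.Adj u v → P u → P v) {u : V} (hu : P u) (v : V) : P v := by
  obtain ⟨p⟩ := hG u v
  induction p with
  | nil => exact hu
  | cons h _ ih => exact ih (hP h hu)

lemma SimpleGraph.Walk.ncard_union_support_le {D : Set V} {a b : V} (p : G.Walk a b)
    (ha : a ∈ D) : (D ∪ {x | x ∈ p.support}).ncard ≤ D.ncard + p.length := by
  classical
  have hunion : D ∪ {x | x ∈ p.support} = D ∪ ↑p.support.tail.toFinset := by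
    ext x
    simp only [mem_union, mem_ofPred_eq, Finset.mem_coe, List.mem_toFinset, p.mem_support_iff]
    rcases eq_or_ne x a with rfl | _ <;> simp_all
  have htail : p.support.tail.length = p.length := by
    rw [List.length_tail, p.length_support, Nat.add_sub_cancel]
  calc (D ∪ {x | x ∈ p.support}).ncard
      ≤ D.ncard + (↑p.support.tail.toFinset : Set V).ncard := hunion ▸ ncard_union_le _ _
    _ ≤ D.ncard + p.length := by
      rw [ncard_coe_finset, ← htail]
      exact Nat.add_le_add_left (List.toFinset_card_le _) _

lemma isRDom.mono {r : ℕ} {M D : Set V} (hM : isRDom G r M) (hMD : M ⊆ D) : isRDom G r D :=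
  fun w => let ⟨v, hv, hw⟩ := hM w; ⟨v, hMD hv, hw⟩

lemma isRDom.exists_walk_length_le_to_diff {r : ℕ} {M A : Set V} (hG : G.Preconnected)
    (hM : isRDom G r M) (hA : A.Nonempty) (hMA : ¬M ⊆ A) :
    ∃ a ∈ A, ∃ m ∈ M \ A, ∃ p : G.Walk a m, p.length ≤ 2 * r + 1 := by
  by_contra! hfar
  have hclosed : ∀ ⦃u v⦄, G.Adj u v → (∃ a ∈ A, u ∈ ball G r a) → ∃ a ∈ A, v ∈ ball G r a := by
    rintro u v huv ⟨a, ha, p, hp⟩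
    obtain ⟨m, hm, q, hq⟩ := hM v
    refine ⟨m, by_contra fun hmA => ?_, q, hq⟩
    refine (hfar a ha m ⟨hm, hmA⟩ (p.append (.cons huv q.reverse))).not_ge ?_
    simp only [Walk.length_append, Walk.length_cons, Walk.length_reverse]
    omega
  obtain ⟨a₀, ha₀⟩ := hA
  obtain ⟨m, hm, hmA⟩ := not_subset.1 hMA
  obtain ⟨a, ha, p, hp⟩ := hG.of_adj_closed hclosed ⟨a₀, ha₀, .nil, Nat.zero_le _⟩ m
  exact (hfar a ha m ⟨hm, hmA⟩ p).not_ge (by omega)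

theorem isRDom.exists_connected_superset_ncard_le {r : ℕ} {M : Set V} (hG : G.Connected)
    (hM : isRDom G r M) (hMfin : M.Finite) :
    ∃ D, M ⊆ D ∧ (G.induce D).Connected ∧ D.ncard ≤ (2 * r + 1) * M.ncard := by
  obtain ⟨m₀, hm₀, -⟩ := hM hG.nonempty.some
  set S := {A | A ⊆ M ∧ A.Nonempty ∧
    ∃ D, A ⊆ D ∧ (G.induce D).Connected ∧ D.ncard ≤ (2 * r + 1) * A.ncard}
  have hS : S.Finite := hMfin.finite_subsets.subset fun _ hA => hA.1
  have hsingle : {m₀} ∈ S :=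
    ⟨singleton_subset_iff.2 hm₀, singleton_nonempty _, {m₀}, subset_rfl, by simp, by simp⟩
  obtain ⟨A, ⟨hAM, hAne, D, hAD, hD, hDcard⟩, hmax⟩ := hS.exists_maximal ⟨_, hsingle⟩
  obtain rfl : A = M := by
    by_contra hne
    obtain ⟨a, ha, m, ⟨hmM, hmA⟩, p, hp⟩ :=
      hM.exists_walk_length_le_to_diff hG.preconnected hAne fun h => hne (hAM.antisymm h)
    have hgrow : insert m A ∈ S := by
      refine ⟨insert_subset hmM hAM, insert_nonempty _ _, D ∪ {x | x ∈ p.support}, ?_, ?_, ?_⟩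
      · exact insert_subset (Or.inr p.end_mem_support) (hAD.trans subset_union_left)
      · exact induce_union_connected hD.preconnected p.connected_induce_support.preconnected
          ⟨a, hAD ha, p.start_mem_support⟩
      · rw [ncard_insert_of_notMem hmA (hMfin.subset hAM)]
        linarith [p.ncard_union_support_le (hAD ha)]
    exact hmA (hmax hgrow (subset_insert _ _) (mem_insert _ _))
  exact ⟨D, hAD, hD, hDcard⟩

end

theorem stmt9_general {V : Type*} [Fintype V] (G : SimpleGraph V)
    (hG : G.Connected) (r c : ℕ) (hc1 : 1 ≤ c)
    (M : Set V) (hM : isRDom G r M) :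
    ∃ D' : Set V, isRDom G r D' ∧ (G.induce D').Connected ∧
      D'.ncard ≤ c ^ 2 * (2 * r + 1) * M.ncard := by
  obtain ⟨D, hMD, hD, hcard⟩ := hM.exists_connected_superset_ncard_le hG M.toFinite
  refine ⟨D, hM.mono hMD, hD, hcard.trans ?_⟩
  rw [mul_assoc]
  exact Nat.le_mul_of_pos_left _ (one_le_pow₀ hc1)

/-- let `G` be connected with `|WReach_{2r+1}[G,L,v]| ≤ c` for all `v`
(`c ≥ 1`). Then for every distance-`r` dominating set `M` there is a connected
distance-`r` dominating set `D'` with `|D'| ≤ c²·(2r+1)·|M|`. -/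
theorem stmt9 {V : Type*} [Fintype V] [LinearOrder V] (G : SimpleGraph V)
    (hG : G.Connected) (r c : ℕ) (hc1 : 1 ≤ c)
    (hc : ∀ v : V, (wreach G (2 * r + 1) v).ncard ≤ c)
    (M : Set V) (hM : isRDom G r M) :
    ∃ D' : Set V, isRDom G r D' ∧ (G.induce D').Connected ∧
      D'.ncard ≤ c ^ 2 * (2 * r + 1) * M.ncard :=
  stmt9_general G hG r c hc1 M hM
end

section
/- Let G be a finite connected simple graph, r ∈ ℕ, D a distance-r dominating set of G, and id : V(G) → ℕ injective. Then the family 𝓑(D) = {B(v) : v ∈ D} of D-partition classes is a partition of V(G) into nonempty parts, and for every v ∈ D the induced subgraph G[B(v)] is connected of radius at most r; indeed every w ∈ B(v) is joined to v by a path of length at most r all of whose vertices lie in B(v). -/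
/-- The lexicographic order on paths with respect to an injection `idf : V → ℕ`:
a shorter path is smaller; paths of equal length are compared by the lexicographic
order of the `idf`-sequences of their vertices. -/
def walkLE {V : Type*} (idf : V → ℕ) {G : SimpleGraph V} {a b c d : V}
    (p : G.Walk a b) (q : G.Walk c d) : Prop :=
  p.length < q.length ∨ (p.length = q.length ∧ p.support.map idf ≤ q.support.map idf)

/-- The class of `v` in the `D`-partition, with respect to a choice `P` of
lexicographically least paths: `B(v) = {w : P(v,w) ≤_lex P(u,w) for all u ∈ D, u ≠ v}`. -/
def Bpart {V : Type*} {G : SimpleGraph V} (idf : V → ℕ) (D : Set V)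
    (P : ∀ v w : V, G.Walk v w) (v : V) : Set V :=
  {w | ∀ u ∈ D, u ≠ v → walkLE idf (P v w) (P u w)}


/-!
Compare paths by the key (length, `idf`-sequence of the vertices) in the lexicographic product
order; least paths are then geodesics. The heart of the matter is that `B(v)` is closed under
taking vertices of the least paths `P(v,w)`, `w ∈ B(v)`: if some `u ∈ D` beat `v` at a vertex
`x` of `P(v,w)`, splicing `P(u,x)` with the tail of `P(v,w)` after `x` would give a `u`–`w`
walk with a smaller key than `P(v,w)`; since that walk is no longer than `P(v,w)`, it is a
geodesic, hence a path, so `P(u,w)` would beat `P(v,w)`. Connectivity and the radius bound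
follow, and the classes are disjoint because a key determines the `idf` of the start vertex.
-/

open SimpleGraph Walk

theorem List.Lex.append_of_length_eq {α : Type*} {r : α → α → Prop} {l₁ l₂ : List α}
    (h : List.Lex r l₁ l₂) (hlen : l₁.length = l₂.length) (t : List α) :
    List.Lex r (l₁ ++ t) (l₂ ++ t) := by
  induction h with
  | nil => simp at hlen
  | rel h => exact List.Lex.rel h
  | cons _ ih => exact List.Lex.cons (ih (by simpa using hlen))

section WalkKey

variable {V : Type*} {G : SimpleGraph V} (idf : V → ℕ)

def walkKey {a b : V} (p : G.Walk a b) : ℕ ×ₗ List ℕ :=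
  toLex (p.length, p.support.map idf)

theorem walkLE_iff_walkKey_le {a b c d : V} (p : G.Walk a b) (q : G.Walk c d) :
    walkLE idf p q ↔ walkKey idf p ≤ walkKey idf q := by
  rw [walkKey, walkKey, Prod.Lex.le_iff]
  rfl

variable {idf}

theorem length_le_of_walkKey_le {a b c d : V} {p : G.Walk a b} {q : G.Walk c d}
    (h : walkKey idf p ≤ walkKey idf q) : p.length ≤ q.length :=
  Prod.Lex.monotone_fst _ _ h

theorem length_le_of_walkLE {a b c d : V} {p : G.Walk a b} {q : G.Walk c d}
    (h : walkLE idf p q) : p.length ≤ q.length :=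
  length_le_of_walkKey_le ((walkLE_iff_walkKey_le idf p q).1 h)

theorem walkKey_append_lt_append {a b x y : V} {p : G.Walk a x} {q : G.Walk b x}
    (h : walkKey idf p < walkKey idf q) (t : G.Walk x y) :
    walkKey idf (p.append t) < walkKey idf (q.append t) := by
  simp only [walkKey, Prod.Lex.toLex_lt_toLex, length_append, support_append,
    List.map_append] at h ⊢
  rcases h with hlen | ⟨hlen, hlex⟩
  · exact .inl (by omega)
  · refine .inr ⟨by omega, hlex.append_of_length_eq (by simp [hlen]) _⟩

theorem start_eq_of_walkKey_eq (hinj : Function.Injective idf) {a b c d : V}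
    {p : G.Walk a b} {q : G.Walk c d} (h : walkKey idf p = walkKey idf q) : a = c := by
  have hsupp : p.support.map idf = q.support.map idf := congrArg (fun k => (ofLex k).2) h
  rw [← cons_tail_support p, ← cons_tail_support q, List.map_cons, List.map_cons] at hsupp
  exact hinj (List.cons.inj hsupp).1

end WalkKey

section IsLexLeast

variable {V : Type*} {G : SimpleGraph V} {idf : V → ℕ} {v w : V}

def IsLexLeast (idf : V → ℕ) (p : G.Walk v w) : Prop :=
  p.IsPath ∧ ∀ q : G.Walk v w, q.IsPath → walkLE idf p q

theorem IsLexLeast.length_eq_dist {p : G.Walk v w} (hp : IsLexLeast idf p) :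
    p.length = G.dist v w := by
  obtain ⟨q, hq, hlen⟩ := p.reachable.exists_path_of_dist
  exact le_antisymm (hlen ▸ length_le_of_walkLE (hp.2 q hq)) (G.dist_le p)

theorem IsLexLeast.walkKey_le_of_length_le {p : G.Walk v w} (hp : IsLexLeast idf p)
    (q : G.Walk v w) (hq : q.length ≤ p.length) : walkKey idf p ≤ walkKey idf q :=
  have hgeo : q.length = G.dist v w := le_antisymm (hq.trans hp.length_eq_dist.le) (G.dist_le q)
  (walkLE_iff_walkKey_le idf p q).1 (hp.2 q (q.isPath_of_length_eq_dist hgeo))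

end IsLexLeast

section Bpart

variable {V : Type*} {G : SimpleGraph V} {idf : V → ℕ} {D : Set V} {P : ∀ v w : V, G.Walk v w}

theorem exists_mem_Bpart (hfin : D.Finite) (hne : D.Nonempty) (w : V) :
    ∃ v ∈ D, w ∈ Bpart idf D P v := by
  obtain ⟨v, hv, hmin⟩ := Set.exists_min_image D (fun u => walkKey idf (P u w)) hfin hne
  exact ⟨v, hv, fun u hu _ => (walkLE_iff_walkKey_le idf _ _).2 (hmin u hu)⟩

theorem disjoint_Bpart (hinj : Function.Injective idf) {u v : V} (hv : v ∈ D) (hu : u ∈ D)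
    (hne : v ≠ u) : Disjoint (Bpart idf D P v) (Bpart idf D P u) :=
  Set.disjoint_left.2 fun _ hwv hwu => hne <| start_eq_of_walkKey_eq hinj <| le_antisymm
    ((walkLE_iff_walkKey_le idf _ _).1 (hwv u hu hne.symm))
    ((walkLE_iff_walkKey_le idf _ _).1 (hwu v hv hne))

variable (hP : ∀ v w : V, IsLexLeast idf (P v w))
include hP

theorem mem_Bpart_self (v : V) : v ∈ Bpart idf D P v := fun u _ huv => by
  left
  rw [(hP v v).length_eq_dist, dist_self]
  exact Nat.pos_of_ne_zero fun h => huv (eq_of_length_eq_zero h)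

theorem length_le_of_mem_Bpart {r : ℕ} (hD : isRDom G r D) {v w : V}
    (hw : w ∈ Bpart idf D P v) : (P v w).length ≤ r := by
  obtain ⟨u, hu, q, hq⟩ := hD w
  have huw : (P u w).length ≤ r := ((hP u w).length_eq_dist.trans_le (G.dist_le q)).trans hq
  by_cases huv : u = v
  · exact huv ▸ huw
  · exact (length_le_of_walkLE (hw u hu huv)).trans huw

theorem mem_Bpart_of_mem_support {v w x : V} (hw : w ∈ Bpart idf D P v)
    (hx : x ∈ (P v w).support) : x ∈ Bpart idf D P v := by
  classical
  intro u hu huv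
  rw [walkLE_iff_walkKey_le]
  by_contra! hux
  let q := (P u x).append ((P v w).dropUntil x hx)
  have hqp : walkKey idf q < walkKey idf (P v w) := by
    have hprefix := (walkLE_iff_walkKey_le idf _ _).1
      ((hP v x).2 _ ((hP v w).1.takeUntil hx))
    simpa only [take_spec] using
      walkKey_append_lt_append (hux.trans_le hprefix) ((P v w).dropUntil x hx)
  have hpu : walkKey idf (P v w) ≤ walkKey idf (P u w) :=
    (walkLE_iff_walkKey_le idf _ _).1 (hw u hu huv)
  have huq : walkKey idf (P u w) ≤ walkKey idf q := (hP u w).walkKey_le_of_length_le q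
    ((length_le_of_walkKey_le hqp.le).trans (length_le_of_walkKey_le hpu))
  exact (hqp.trans_le (hpu.trans huq)).false

theorem connected_induce_Bpart (v : V) : (G.induce (Bpart idf D P v)).Connected :=
  induce_connected_of_patches v (mem_Bpart_self hP v) fun {w} hw =>
    ⟨{x | x ∈ (P v w).support}, fun _ hx => mem_Bpart_of_mem_support hP hw hx,
      (P v w).start_mem_support, (P v w).end_mem_support,
      (P v w).connected_induce_support.preconnected _ _⟩

end Bpart

theorem stmt10_general {V : Type*} [Fintype V] (G : SimpleGraph V) (r : ℕ)
    (D : Set V) (hD : isRDom G r D)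
    (idf : V → ℕ) (hinj : Function.Injective idf)
    (P : ∀ v w : V, G.Walk v w)
    (hP : ∀ v w : V, (P v w).IsPath ∧ ∀ q : G.Walk v w, q.IsPath → walkLE idf (P v w) q) :
    -- the classes cover `V(G)`
    (∀ w : V, ∃ v ∈ D, w ∈ Bpart idf D P v) ∧
    -- distinct classes are disjoint
    (∀ v ∈ D, ∀ u ∈ D, v ≠ u → Disjoint (Bpart idf D P v) (Bpart idf D P u)) ∧
    -- the classes are nonempty
    (∀ v ∈ D, (Bpart idf D P v).Nonempty) ∧
    -- each class induces a connected subgraph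
    (∀ v ∈ D, (G.induce (Bpart idf D P v)).Connected) ∧
    -- of radius at most `r`, with center `v`
    (∀ v ∈ D, ∀ w ∈ Bpart idf D P v,
      ∃ p : G.Walk v w, p.length ≤ r ∧ ∀ x ∈ p.support, x ∈ Bpart idf D P v) := by
  refine ⟨fun w => ?_, fun v hv u hu hne => disjoint_Bpart hinj hv hu hne,
    fun v _ => ⟨v, mem_Bpart_self hP v⟩, fun v _ => connected_induce_Bpart hP v,
    fun v _ w hw => ⟨P v w, length_le_of_mem_Bpart hP hD hw,
      fun _ hx => mem_Bpart_of_mem_support hP hw hx⟩⟩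
  obtain ⟨v, hv, -⟩ := hD w
  exact exists_mem_Bpart (Set.toFinite D) ⟨v, hv⟩ w

/-- for a connected `G`, a distance-`r` dominating set `D`, an injective
`idf : V → ℕ`, and `P v w` the `≤_lex`-least path from `v` to `w`, the family
`{B(v) : v ∈ D}` is a partition of `V(G)` into nonempty parts, and each `G[B(v)]` is
connected of radius at most `r`: every `w ∈ B(v)` is joined to `v` by a path of length
at most `r` all of whose vertices lie in `B(v)`. -/
theorem stmt10 {V : Type*} [Fintype V] (G : SimpleGraph V) (hG : G.Connected) (r : ℕ)
    (D : Set V) (hD : isRDom G r D)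
    (idf : V → ℕ) (hinj : Function.Injective idf)
    (P : ∀ v w : V, G.Walk v w)
    (hP : ∀ v w : V, (P v w).IsPath ∧ ∀ q : G.Walk v w, q.IsPath → walkLE idf (P v w) q) :
    -- the classes cover `V(G)`
    (∀ w : V, ∃ v ∈ D, w ∈ Bpart idf D P v) ∧
    -- distinct classes are disjoint
    (∀ v ∈ D, ∀ u ∈ D, v ≠ u → Disjoint (Bpart idf D P v) (Bpart idf D P u)) ∧
    -- the classes are nonempty
    (∀ v ∈ D, (Bpart idf D P v).Nonempty) ∧
    -- each class induces a connected subgraph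
    (∀ v ∈ D, (G.induce (Bpart idf D P v)).Connected) ∧
    -- of radius at most `r`, with center `v`
    (∀ v ∈ D, ∀ w ∈ Bpart idf D P v,
      ∃ p : G.Walk v w, p.length ≤ r ∧ ∀ x ∈ p.support, x ∈ Bpart idf D P v) :=
  stmt10_general G r D hD idf hinj P hP
end

section
/- Let G be a finite connected simple graph, r ∈ ℕ, L a linear order on V(G), and c ∈ ℕ with |WReach_{2r+1}[G,L,v]| ≤ c for all v ∈ V(G). Let D be any distance-r dominating set of G and suppose that for each v ∈ D and each w ∈ WReach_{2r+1}[G,L,v] a path P_{v,w} of length at most 2r+1 between v and w is chosen. Then the set D' = D ∪ ⋃_{v∈D} ⋃_{w∈WReach_{2r+1}[G,L,v]} V(P_{v,w}) is a connected distance-r dominating set of G of size |D'| ≤ c·(2r+1)·|D|. -/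
/-- Endpoints of a walk whose support lies in `s` are reachable in the induced graph. -/
lemma induce_reachable_of_walk {V : Type*} {G : SimpleGraph V} {s : Set V} {u v : V}
    (p : G.Walk u v) (h : ∀ x ∈ p.support, x ∈ s) (hu : u ∈ s) (hv : v ∈ s) :
    (G.induce s).Reachable ⟨u, hu⟩ ⟨v, hv⟩ := by
  induction p with
  | nil => rfl
  | @cons a b c hab q ih =>
      have hb : b ∈ s := h b (by simp)
      have hadj : (G.induce s).Adj ⟨a, hu⟩ ⟨b, hb⟩ := hab
      exact hadj.reachable.trans (ih (fun x hx => h x (by simp [hx])) hb hv)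

/-- Split a walk at position `n`. -/
lemma walk_split {V : Type*} {G : SimpleGraph V} :
    ∀ {v v' : V} (p : G.Walk v v') (n : ℕ),
      ∃ (u : V) (q1 : G.Walk v u) (q2 : G.Walk u v'),
        q1.length = min n p.length ∧ q1.length + q2.length = p.length := by
  intro v v' p
  induction p with
  | nil => intro n; exact ⟨_, .nil, .nil, by simp, by simp⟩
  | @cons a b c hab q ih =>
      intro n
      match n with
      | 0 => exact ⟨a, .nil, .cons hab q, by simp, by simp⟩
      | (m+1) =>
          obtain ⟨u, q1, q2, h1, h2⟩ := ih m
          refine ⟨u, .cons hab q1, q2, ?_, ?_⟩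
          · simp only [SimpleGraph.Walk.length_cons, h1]
            omega
          · simp only [SimpleGraph.Walk.length_cons]
            omega

lemma mem_wreach_self {V : Type*} [LinearOrder V] (G : SimpleGraph V) (s : ℕ) (v : V) :
    v ∈ wreach G s v :=
  ⟨.nil, SimpleGraph.Walk.IsPath.nil, by simp, by simp⟩

/-- let `G` be connected with `|WReach_{2r+1}[G,L,v]| ≤ c` for all `v`,
let `D` be a distance-`r` dominating set, and for each `v ∈ D` and each
`w ∈ WReach_{2r+1}[G,L,v]` let `P v w` be a chosen path of length at most `2r+1`
between `v` and `w`. Then `D' = D ∪ ⋃_{v ∈ D} ⋃_{w ∈ WReach_{2r+1}[G,L,v]} V(P v w)` is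
a connected distance-`r` dominating set of size at most `c·(2r+1)·|D|`. -/
theorem stmt13 {V : Type*} [Fintype V] [LinearOrder V] (G : SimpleGraph V)
    (hG : G.Connected) (r c : ℕ)
    (hc : ∀ v : V, (wreach G (2 * r + 1) v).ncard ≤ c)
    (D : Set V) (hD : isRDom G r D)
    (P : ∀ v w : V, G.Walk v w)
    (hP : ∀ v ∈ D, ∀ w ∈ wreach G (2 * r + 1) v,
      (P v w).IsPath ∧ (P v w).length ≤ 2 * r + 1)
    (D' : Set V)
    (hD' : D' = D ∪
      ⋃ (v : V) (_ : v ∈ D) (w : V) (_ : w ∈ wreach G (2 * r + 1) v),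
        {x : V | x ∈ (P v w).support}) :
    isRDom G r D' ∧ (G.induce D').Connected ∧ D'.ncard ≤ c * (2 * r + 1) * D.ncard := by
  classical
  have hsub : D ⊆ D' := by rw [hD']; exact Set.subset_union_left
  -- supports of chosen paths lie in D'
  have hPsup : ∀ v ∈ D, ∀ w ∈ wreach G (2 * r + 1) v, ∀ x ∈ (P v w).support, x ∈ D' := by
    intro v hv w hw x hx
    rw [hD']
    right
    exact Set.mem_iUnion.2 ⟨v, Set.mem_iUnion.2 ⟨hv, Set.mem_iUnion.2 ⟨w,
      Set.mem_iUnion.2 ⟨hw, hx⟩⟩⟩⟩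
  -- direct link for D-vertices at distance ≤ 2r+1
  have hlink : ∀ v, ∀ hv : v ∈ D, ∀ v', ∀ hv' : v' ∈ D, ∀ q0 : G.Walk v v',
      q0.length ≤ 2 * r + 1 →
      (G.induce D').Reachable ⟨v, hsub hv⟩ ⟨v', hsub hv'⟩ := by
    intro v hv v' hv' q0 hlen0
    set q := q0.bypass with hqdef
    have hq : q.IsPath := q0.bypass_isPath
    have hlen : q.length ≤ 2 * r + 1 := le_trans q0.length_bypass_le hlen0
    have hne : q.support.toFinset.Nonempty := by
      simp [List.toFinset_nonempty_iff, q.support_ne_nil]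
    set w := q.support.toFinset.min' hne with hwdef
    have hwmem : w ∈ q.support := by
      have := q.support.toFinset.min'_mem hne
      simpa using this
    have hwmin : ∀ x ∈ q.support, w ≤ x := fun x hx =>
      Finset.min'_le _ x (List.mem_toFinset.2 hx)
    have hw1 : w ∈ wreach G (2 * r + 1) v := by
      refine ⟨(q.takeUntil w hwmem).reverse, (hq.takeUntil hwmem).reverse, ?_, ?_⟩
      · rw [SimpleGraph.Walk.length_reverse]
        exact le_trans (q.length_takeUntil_le hwmem) hlen
      · intro x hx
        rw [SimpleGraph.Walk.support_reverse, List.mem_reverse] at hx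
        exact hwmin x (q.support_takeUntil_subset hwmem hx)
    have hw2 : w ∈ wreach G (2 * r + 1) v' := by
      refine ⟨q.dropUntil w hwmem, hq.dropUntil hwmem, ?_, ?_⟩
      · exact le_trans (q.length_dropUntil_le hwmem) hlen
      · intro x hx
        exact hwmin x (q.support_dropUntil_subset hwmem hx)
    have hwD' : w ∈ D' := hPsup v hv w hw1 w (P v w).end_mem_support
    have r1 : (G.induce D').Reachable ⟨v, hsub hv⟩ ⟨w, hwD'⟩ :=
      induce_reachable_of_walk (P v w) (hPsup v hv w hw1) (hsub hv) hwD'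
    have r2 : (G.induce D').Reachable ⟨v', hsub hv'⟩ ⟨w, hwD'⟩ :=
      induce_reachable_of_walk (P v' w) (hPsup v' hv' w hw2) (hsub hv') hwD'
    exact r1.trans r2.symm
  -- any two D-vertices are linked, by induction on walk length
  have hlinkN : ∀ N : ℕ, ∀ v, ∀ hv : v ∈ D, ∀ v', ∀ hv' : v' ∈ D, ∀ p : G.Walk v v',
      p.length ≤ N → (G.induce D').Reachable ⟨v, hsub hv⟩ ⟨v', hsub hv'⟩ := by
    intro N
    induction N with
    | zero =>
        intro v hv v' hv' p hp
        exact hlink v hv v' hv' p (le_trans hp (by omega))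
    | succ N ih =>
        intro v hv v' hv' p hp
        by_cases hshort : p.length ≤ 2 * r + 1
        · exact hlink v hv v' hv' p hshort
        · push_neg at hshort
          obtain ⟨u, q1, q2, h1, h2⟩ := walk_split p (r + 1)
          have hq1 : q1.length = r + 1 := by rw [h1]; omega
          obtain ⟨v1, hv1, β, hβ⟩ := hD u
          have link1 : (G.induce D').Reachable ⟨v, hsub hv⟩ ⟨v1, hsub hv1⟩ :=
            hlink v hv v1 hv1 (q1.append β.reverse)
              (by rw [SimpleGraph.Walk.length_append, SimpleGraph.Walk.length_reverse]; omega)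
          have link2 : (G.induce D').Reachable ⟨v1, hsub hv1⟩ ⟨v', hsub hv'⟩ :=
            ih v1 hv1 v' hv' (β.append q2)
              (by rw [SimpleGraph.Walk.length_append]; omega)
          exact link1.trans link2
  -- every vertex of D' is linked to a vertex of D
  have hattach : ∀ x, ∀ hx : x ∈ D', ∃ v, ∃ hv : v ∈ D,
      (G.induce D').Reachable ⟨x, hx⟩ ⟨v, hsub hv⟩ := by
    intro x hx
    have hx' := hx
    rw [hD'] at hx'
    rcases hx' with hxD | hxU
    · exact ⟨x, hxD, SimpleGraph.Reachable.refl _⟩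
    · simp only [Set.mem_iUnion] at hxU
      obtain ⟨v, hv, w, hw, hxsup⟩ := hxU
      have hxsup : x ∈ (P v w).support := hxsup
      have := induce_reachable_of_walk ((P v w).takeUntil x hxsup)
        (fun y hy => hPsup v hv w hw y ((P v w).support_takeUntil_subset hxsup hy))
        (hsub hv) hx
      exact ⟨v, hv, this.symm⟩
  -- connectivity
  have hconn : (G.induce D').Connected := by
    have hNE : Nonempty V := hG.nonempty
    obtain ⟨z⟩ := hNE
    obtain ⟨v0, hv0, -⟩ := hD z
    rw [SimpleGraph.connected_iff]
    refine ⟨?_, ⟨⟨v0, hsub hv0⟩⟩⟩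
    rintro ⟨x, hx⟩ ⟨y, hy⟩
    obtain ⟨v, hv, rx⟩ := hattach x hx
    obtain ⟨v', hv', ry⟩ := hattach y hy
    obtain ⟨p⟩ := hG.preconnected v v'
    exact rx.trans ((hlinkN p.length v hv v' hv' p le_rfl).trans ry.symm)
  refine ⟨fun w => (hD w).imp fun v hv => ⟨hsub hv.1, hv.2⟩, hconn, ?_⟩
  -- cardinality bound
  set W : V → Finset V := fun v => (wreach G (2 * r + 1) v).toFinset with hW
  set T : V → Finset V := fun v => (W v).biUnion (fun w => (P v w).support.toFinset) with hT
  have hvW : ∀ v, v ∈ W v := fun v => Set.mem_toFinset.2 (mem_wreach_self G _ v)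
  have hTcard : ∀ v ∈ D, (T v).card ≤ c * (2 * r + 1) := by
    intro v hv
    have hc1 : 1 ≤ c := by
      have h1 : 0 < (wreach G (2 * r + 1) v).ncard :=
        (Set.ncard_pos (Set.toFinite _)).2 ⟨v, mem_wreach_self G _ v⟩
      have h2 := hc v
      omega
    have hkey : T v ⊆ insert v (((W v).erase v).biUnion
        (fun w => (P v w).support.toFinset.erase v)) := by
      intro x hx
      obtain ⟨w, hwW, hxs⟩ := Finset.mem_biUnion.1 hx
      by_cases hxv : x = v
      · simp [hxv]
      · have hwv : w ≠ v := by
          intro hwveq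
          have hPP := (hP v hv v (mem_wreach_self G _ v)).1
          rw [SimpleGraph.Walk.isPath_iff_eq_nil] at hPP
          rw [hwveq, hPP] at hxs
          exact hxv (by simpa using hxs)
        refine Finset.mem_insert_of_mem (Finset.mem_biUnion.2
          ⟨w, Finset.mem_erase.2 ⟨hwv, hwW⟩, Finset.mem_erase.2 ⟨hxv, hxs⟩⟩)
    calc (T v).card ≤ (insert v (((W v).erase v).biUnion
            (fun w => (P v w).support.toFinset.erase v))).card := Finset.card_le_card hkey
      _ ≤ 1 + (((W v).erase v).biUnion
            (fun w => (P v w).support.toFinset.erase v)).card := by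
          rw [add_comm]; exact Finset.card_insert_le _ _
      _ ≤ 1 + ∑ w ∈ (W v).erase v, ((P v w).support.toFinset.erase v).card := by
          exact Nat.add_le_add_left (Finset.card_biUnion_le) 1
      _ ≤ 1 + ∑ _w ∈ (W v).erase v, (2 * r + 1) := by
          refine Nat.add_le_add_left (Finset.sum_le_sum fun w hw => ?_) 1
          have hwW : w ∈ wreach G (2 * r + 1) v :=
            Set.mem_toFinset.1 (Finset.mem_erase.1 hw).2
          have hvs : v ∈ (P v w).support.toFinset :=
            List.mem_toFinset.2 (P v w).start_mem_support
          have h3 : (P v w).support.toFinset.card ≤ 2 * r + 2 := by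
            calc (P v w).support.toFinset.card ≤ (P v w).support.length :=
                  (P v w).support.toFinset_card_le
              _ = (P v w).length + 1 := (P v w).length_support
              _ ≤ 2 * r + 2 := by have := (hP v hv w hwW).2; omega
          rw [Finset.card_erase_of_mem hvs]
          omega
      _ = 1 + ((W v).erase v).card * (2 * r + 1) := by rw [Finset.sum_const, smul_eq_mul]
      _ ≤ 1 + (c - 1) * (2 * r + 1) := by
          have : ((W v).erase v).card ≤ c - 1 := by
            rw [Finset.card_erase_of_mem (hvW v)]
            have : (W v).card ≤ c := by
              rw [hW]
              rw [← Set.ncard_eq_toFinset_card']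
              exact hc v
            omega
          exact Nat.add_le_add_left (Nat.mul_le_mul_right _ this) 1
      _ ≤ c * (2 * r + 1) := by
          obtain ⟨c', rfl⟩ : ∃ c', c = c' + 1 := ⟨c - 1, by omega⟩
          simp only [Nat.add_sub_cancel]
          have : (c' + 1) * (2 * r + 1) = c' * (2 * r + 1) + (2 * r + 1) := by ring
          omega
  have hsubset : D'.toFinset ⊆ D.toFinset.biUnion T := by
    intro x hx
    have hx' := Set.mem_toFinset.1 hx
    rw [hD'] at hx'
    rcases hx' with hxD | hxU
    · exact Finset.mem_biUnion.2 ⟨x, Set.mem_toFinset.2 hxD,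
        Finset.mem_biUnion.2 ⟨x, hvW x, List.mem_toFinset.2 (P x x).start_mem_support⟩⟩
    · simp only [Set.mem_iUnion] at hxU
      obtain ⟨v, hv, w, hw, hxsup⟩ := hxU
      exact Finset.mem_biUnion.2 ⟨v, Set.mem_toFinset.2 hv,
        Finset.mem_biUnion.2 ⟨w, Set.mem_toFinset.2 hw, List.mem_toFinset.2 hxsup⟩⟩
  calc D'.ncard = D'.toFinset.card := Set.ncard_eq_toFinset_card' D'
    _ ≤ (D.toFinset.biUnion T).card := Finset.card_le_card hsubset
    _ ≤ ∑ v ∈ D.toFinset, (T v).card := Finset.card_biUnion_le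
    _ ≤ ∑ _v ∈ D.toFinset, c * (2 * r + 1) :=
        Finset.sum_le_sum fun v hv => hTcard v (Set.mem_toFinset.1 hv)
    _ = D.toFinset.card * (c * (2 * r + 1)) := by rw [Finset.sum_const, smul_eq_mul]
    _ = c * (2 * r + 1) * D.ncard := by
        rw [Set.ncard_eq_toFinset_card' D, mul_comm]
end

section
/- Let G be a finite connected simple graph and r ∈ ℕ. Let D be a distance-r dominating set of G and let u,v ∈ D with dist(u,v) ≥ 2r+2. Then there exists a vertex w ∈ D with w ∉ {u,v} such that dist(u,w) ≤ 2r+1 and dist(w,v) < dist(u,v). -/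

lemma walk_to_getVert {V : Type*} {G : SimpleGraph V} :
    ∀ {u v : V} (p : G.Walk u v) (n : ℕ), ∃ q : G.Walk u (p.getVert n), q.length ≤ n := by
  intro u v p
  induction p with
  | nil => intro n; exact ⟨SimpleGraph.Walk.nil.copy rfl (SimpleGraph.Walk.getVert_of_length_le _ (by simp)).symm, by simp⟩
  | cons h q ih =>
    intro n
    cases n with
    | zero => exact ⟨SimpleGraph.Walk.nil.copy rfl (by simp), by simp⟩
    | succ n =>
      obtain ⟨q', hq'⟩ := ih n
      exact ⟨(q'.cons h).copy rfl (by simp [SimpleGraph.Walk.getVert_cons_succ]), by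
        simpa using Nat.succ_le_succ hq'⟩

lemma walk_from_getVert {V : Type*} {G : SimpleGraph V} :
    ∀ {u v : V} (p : G.Walk u v) (n : ℕ),
      ∃ q : G.Walk (p.getVert n) v, q.length ≤ p.length - n := by
  intro u v p
  induction p with
  | nil => intro n; exact ⟨SimpleGraph.Walk.nil.copy (SimpleGraph.Walk.getVert_of_length_le _ (by simp)).symm rfl, by simp⟩
  | cons h q ih =>
    intro n
    cases n with
    | zero =>
      exact ⟨((q.cons h)).copy (by simp) rfl, by simp⟩
    | succ n =>
      obtain ⟨q', hq'⟩ := ih n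
      exact ⟨q'.copy (by simp [SimpleGraph.Walk.getVert_cons_succ]) rfl, by
        simpa using hq'⟩

/-- let `G` be connected, `D` a distance-`r` dominating set, and
`u,v ∈ D` with `dist(u,v) ≥ 2r+2`. Then there is `w ∈ D`, `w ∉ {u,v}`, with
`dist(u,w) ≤ 2r+1` and `dist(w,v) < dist(u,v)`. -/
theorem stmt14 {V : Type*} [Fintype V] (G : SimpleGraph V) (hG : G.Connected) (r : ℕ)
    (D : Set V) (hD : isRDom G r D) (u v : V) (hu : u ∈ D) (hv : v ∈ D)
    (hdist : 2 * r + 2 ≤ G.dist u v) :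
    ∃ w ∈ D, w ≠ u ∧ w ≠ v ∧ G.dist u w ≤ 2 * r + 1 ∧ G.dist w v < G.dist u v := by

  obtain ⟨p, hp⟩ := hG.exists_walk_length_eq_dist u v
  set d := G.dist u v with hd
  set x := p.getVert (r + 1) with hx
  -- dist u x ≤ r+1
  obtain ⟨q1, hq1⟩ := walk_to_getVert p (r + 1)
  have hux : G.dist u x ≤ r + 1 := le_trans (SimpleGraph.dist_le q1) hq1
  -- dist x v ≤ d - (r+1)
  obtain ⟨q2, hq2⟩ := walk_from_getVert p (r + 1)
  have hxv : G.dist x v ≤ d - (r + 1) := le_trans (SimpleGraph.dist_le q2) (by omega)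
  -- lower bound: dist u x ≥ r+1
  have htri1 : d ≤ G.dist u x + G.dist x v := hG.dist_triangle
  have hlow : r + 1 ≤ G.dist u x := by omega
  -- domination of x
  obtain ⟨w, hw, pw, hpw⟩ := hD x
  have hwx : G.dist w x ≤ r := le_trans (SimpleGraph.dist_le pw) hpw
  have hxw : G.dist x w ≤ r := by rwa [SimpleGraph.dist_comm]
  have htri2 : G.dist u w ≤ G.dist u x + G.dist x w := hG.dist_triangle
  have huw : G.dist u w ≤ 2 * r + 1 := by omega
  have hwv : G.dist w v < d := by
    have := hG.dist_triangle (u := w) (v := x) (w := v)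
    omega
  refine ⟨w, hw, ?_, ?_, huw, hwv⟩
  · intro h
    rw [h] at hwx
    omega
  · intro h
    rw [h] at huw
    omega
end
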